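/- Let k, n ∈ ℕ with n > 2k, and let S = {0, 1, …, k} ∪ {n−k, n−k+1, …, n}. Then z_S ≤ z_{{0,1,…,k}} + 1/4; in particular z_S = O(log k). -/

import Mathlib

open Real Finset

/-- `g_S(t) = ∑_{e ∈ S} t^(2e)`. -/
noncomputable def gS (S : Finset ℕ) (t : ℝ) : ℝ := ∑ e ∈ S, t ^ (2 * e)

/-- `h_S(t) = ∑_{e ∈ S} e² t^(2e-2)` (the term for `e = 0` being `0`). -/
noncomputable def hS (S : Finset ℕ) (t : ℝ) : ℝ := ∑ e ∈ S, (e : ℝ) ^ 2 * t ^ (2 * e - 2)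

/-- `q_S(t) = ∑_{e ∈ S} e t^(2e-1)` (the term for `e = 0` being `0`). -/
noncomputable def qS (S : Finset ℕ) (t : ℝ) : ℝ := ∑ e ∈ S, (e : ℝ) * t ^ (2 * e - 1)

/-- `E_S(t) = g_S(t) h_S(t) - q_S(t)²`. -/
noncomputable def ES (S : Finset ℕ) (t : ℝ) : ℝ := gS S t * hS S t - qS S t ^ 2

/-- The expected number of real zeros in `(0,1)`, given by the Edelman–Kostlan integral. -/
noncomputable def zS (S : Finset ℕ) : ℝ :=
  (1 / Real.pi) * ∫ t in (0 : ℝ)..1, Real.sqrt (ES S t) / gS S t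

/-! Let `A = {0,…,k}` and `m = n - k > k`, so that `S = A ⊔ (m + A)`. Shifting an
exponent set by `m` multiplies `g` by `u = t^(2m)` and changes `q`, `h` by terms in `g`, `q`; this
gives the exact identity `E_S = (1 + u)² E_A + (m t^(m-1))² g_A²` together with `g_S = (1 + u) g_A`.
Taking square roots, the density `√E_S / g_S` exceeds `√E_A / g_A` by at most
`m t^(m-1) / (1 + t^(2m))`, the derivative of `arctan (t^m)`, whose integral over `[0,1]` is `π/4`.

For the logarithmic bound, `e t^(e-1) = ∑_{i<e} t^i t^(e-1-i)` is a convolution, so the discrete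
Young inequality `‖b ∗ a‖₂ ≤ ‖b‖₁ ‖a‖₂` gives `h_A ≤ (∑_{i<k} t^i)² g_A`. Hence the density of `A`
is at most `∑_{i<k} t^i`, whose integral over `[0,1]` is the harmonic number `H_k ≤ 1 + log k`. -/

noncomputable def ekDensity (S : Finset ℕ) (t : ℝ) : ℝ := √(ES S t) / gS S t

theorem zS_eq_integral_ekDensity (S : Finset ℕ) :
    zS S = (1 / π) * ∫ t in (0 : ℝ)..1, ekDensity S t := rfl

theorem one_le_gS {S : Finset ℕ} (h0 : 0 ∈ S) (t : ℝ) : 1 ≤ gS S t := by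
  simpa [gS] using single_le_sum (fun e _ => (even_two_mul e).pow_nonneg t) h0

theorem gS_pos {S : Finset ℕ} (h0 : 0 ∈ S) (t : ℝ) : 0 < gS S t := one_pos.trans_le (one_le_gS h0 t)

theorem ES_le_gS_mul_hS (S : Finset ℕ) (t : ℝ) : ES S t ≤ gS S t * hS S t := by
  unfold ES; linarith [sq_nonneg (qS S t)]

theorem ES_nonneg (S : Finset ℕ) (t : ℝ) : 0 ≤ ES S t := by
  have h := sum_mul_sq_le_sq_mul_sq S (fun e => t ^ e) (fun e => (e : ℝ) * t ^ (e - 1))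
  have hq : ∑ e ∈ S, t ^ e * ((e : ℝ) * t ^ (e - 1)) = qS S t := by
    refine sum_congr rfl fun e _ => ?_
    rcases Nat.eq_zero_or_pos e with rfl | he
    · simp
    · rw [mul_left_comm, ← pow_add]; congr 2; omega
  have hg : ∑ e ∈ S, (t ^ e) ^ 2 = gS S t :=
    sum_congr rfl fun e _ => by rw [← pow_mul, mul_comm]
  have hh : ∑ e ∈ S, ((e : ℝ) * t ^ (e - 1)) ^ 2 = hS S t := by
    refine sum_congr rfl fun e _ => ?_
    rw [mul_pow, ← pow_mul]; congr 2; omega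
  rw [hq, hg, hh] at h
  unfold ES; linarith

theorem continuous_ekDensity {S : Finset ℕ} (h0 : 0 ∈ S) : Continuous (ekDensity S) := by
  have hg : Continuous (gS S) := by unfold gS; fun_prop
  have hE : Continuous (ES S) := by unfold ES gS hS qS; fun_prop
  exact hE.sqrt.div hg fun t => (gS_pos h0 t).ne'

section Union

variable {S T : Finset ℕ}

theorem gS_union (h : Disjoint S T) (t : ℝ) : gS (S ∪ T) t = gS S t + gS T t := sum_union h

theorem hS_union (h : Disjoint S T) (t : ℝ) : hS (S ∪ T) t = hS S t + hS T t := sum_union h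

theorem qS_union (h : Disjoint S T) (t : ℝ) : qS (S ∪ T) t = qS S t + qS T t := sum_union h

end Union

section Shift

variable (S : Finset ℕ) (m : ℕ) (t : ℝ)

theorem gS_map_add : gS (S.map (addLeftEmbedding m)) t = t ^ (2 * m) * gS S t := by
  simp only [gS, sum_map, mul_sum, addLeftEmbedding_apply, mul_add, pow_add]

theorem qS_map_add : qS (S.map (addLeftEmbedding m)) t
    = t ^ (2 * m) * qS S t + m * t ^ (2 * m - 1) * gS S t := by
  simp only [qS, gS, sum_map, mul_sum, ← sum_add_distrib, addLeftEmbedding_apply]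
  refine sum_congr rfl fun e _ => ?_
  rcases Nat.eq_zero_or_pos m with rfl | hm
  · simp
  rcases Nat.eq_zero_or_pos e with rfl | he
  · simp
  have h₁ : t ^ (2 * (m + e) - 1) = t ^ (2 * m) * t ^ (2 * e - 1) := by
    rw [← pow_add]; congr 1; omega
  have h₂ : t ^ (2 * (m + e) - 1) = t ^ (2 * m - 1) * t ^ (2 * e) := by
    rw [← pow_add]; congr 1; omega
  push_cast
  linear_combination (e : ℝ) * h₁ + (m : ℝ) * h₂

theorem hS_map_add : hS (S.map (addLeftEmbedding m)) t
    = t ^ (2 * m) * hS S t + 2 * m * t ^ (2 * m - 1) * qS S t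
      + m ^ 2 * t ^ (2 * m - 2) * gS S t := by
  simp only [hS, qS, gS, sum_map, mul_sum, ← sum_add_distrib, addLeftEmbedding_apply]
  refine sum_congr rfl fun e _ => ?_
  rcases Nat.eq_zero_or_pos m with rfl | hm
  · simp
  rcases Nat.eq_zero_or_pos e with rfl | he
  · simp
  have h₀ : t ^ (2 * (m + e) - 2) = t ^ (2 * m) * t ^ (2 * e - 2) := by
    rw [← pow_add]; congr 1; omega
  have h₁ : t ^ (2 * (m + e) - 2) = t ^ (2 * m - 1) * t ^ (2 * e - 1) := by
    rw [← pow_add]; congr 1; omega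
  have h₂ : t ^ (2 * (m + e) - 2) = t ^ (2 * m - 2) * t ^ (2 * e) := by
    rw [← pow_add]; congr 1; omega
  push_cast
  linear_combination (e : ℝ) ^ 2 * h₀ + 2 * (m : ℝ) * e * h₁ + (m : ℝ) ^ 2 * h₂

variable {S m}

theorem ES_union_map_add (hd : Disjoint S (S.map (addLeftEmbedding m))) :
    ES (S ∪ S.map (addLeftEmbedding m)) t
      = (1 + t ^ (2 * m)) ^ 2 * ES S t + (m * t ^ (m - 1)) ^ 2 * gS S t ^ 2 := by
  have hw : (t ^ (m - 1)) ^ 2 = t ^ (2 * m - 2) := by rw [← pow_mul]; congr 1; omega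
  have hv : t ^ (2 * m - 1) * t ^ (2 * m - 1) = t ^ (2 * m - 2) * t ^ (2 * m) := by
    rw [← pow_add, ← pow_add]; congr 1; omega
  rw [ES, ES, gS_union hd, hS_union hd, qS_union hd, gS_map_add, hS_map_add, qS_map_add,
    mul_pow, hw]
  linear_combination (-(m : ℝ) ^ 2 * gS S t ^ 2) * hv

theorem ekDensity_union_map_add_le (h0 : 0 ∈ S) (hd : Disjoint S (S.map (addLeftEmbedding m)))
    {t : ℝ} (ht : 0 ≤ t) :
    ekDensity (S ∪ S.map (addLeftEmbedding m)) t
      ≤ ekDensity S t + m * t ^ (m - 1) / (1 + t ^ (2 * m)) := by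
  have hu : 0 < 1 + t ^ (2 * m) := by positivity
  have hg := gS_pos h0 t
  have hb : 0 ≤ m * t ^ (m - 1) * gS S t := by
    have := pow_nonneg ht (m - 1)
    positivity
  have hsqrt : √(ES (S ∪ S.map (addLeftEmbedding m)) t)
      ≤ (1 + t ^ (2 * m)) * √(ES S t) + m * t ^ (m - 1) * gS S t := by
    rw [Real.sqrt_le_iff, ES_union_map_add t hd]
    refine ⟨by positivity, ?_⟩
    nlinarith [Real.sq_sqrt (ES_nonneg S t),
      mul_nonneg (mul_nonneg hu.le (Real.sqrt_nonneg (ES S t))) hb]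
  have hgU : gS (S ∪ S.map (addLeftEmbedding m)) t = (1 + t ^ (2 * m)) * gS S t := by
    rw [gS_union hd, gS_map_add]; ring
  calc ekDensity (S ∪ S.map (addLeftEmbedding m)) t
      ≤ ((1 + t ^ (2 * m)) * √(ES S t) + m * t ^ (m - 1) * gS S t)
          / ((1 + t ^ (2 * m)) * gS S t) := by
        rw [ekDensity, hgU]; gcongr
    _ = ekDensity S t + m * t ^ (m - 1) / (1 + t ^ (2 * m)) := by
        rw [ekDensity]; field_simp

end Shift

theorem continuous_mul_pow_div_one_add_pow (m : ℕ) :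
    Continuous fun t : ℝ => m * t ^ (m - 1) / (1 + t ^ (2 * m)) :=
  Continuous.div (by fun_prop) (by fun_prop) fun t =>
    (add_pos_of_pos_of_nonneg one_pos ((even_two_mul m).pow_nonneg t)).ne'

theorem integral_mul_pow_div_one_add_pow {m : ℕ} (hm : m ≠ 0) :
    ∫ t in (0 : ℝ)..1, m * t ^ (m - 1) / (1 + t ^ (2 * m)) = π / 4 := by
  have hderiv : ∀ t ∈ Set.uIcc (0 : ℝ) 1,
      HasDerivAt (fun s => arctan (s ^ m)) (m * t ^ (m - 1) / (1 + t ^ (2 * m))) t := by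
    intro t _
    refine ((hasDerivAt_arctan (t ^ m)).comp t (hasDerivAt_pow m t)).congr_deriv ?_
    rw [← pow_mul, mul_comm m 2]; field_simp
  rw [intervalIntegral.integral_eq_sub_of_hasDerivAt hderiv
    ((continuous_mul_pow_div_one_add_pow m).intervalIntegrable 0 1)]
  simp [zero_pow hm, arctan_one]

theorem zS_union_map_add_le {S : Finset ℕ} {m : ℕ} (h0 : 0 ∈ S)
    (hd : Disjoint S (S.map (addLeftEmbedding m))) :
    zS (S ∪ S.map (addLeftEmbedding m)) ≤ zS S + 1 / 4 := by
  have hm : m ≠ 0 := by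
    rintro rfl
    exact disjoint_left.1 hd h0 (mem_map.2 ⟨0, h0, rfl⟩)
  have h0U : 0 ∈ S ∪ S.map (addLeftEmbedding m) := mem_union_left _ h0
  have hint :=
    (continuous_mul_pow_div_one_add_pow m).intervalIntegrable (μ := MeasureTheory.volume) 0 1
  have hle : ∫ t in (0 : ℝ)..1, ekDensity (S ∪ S.map (addLeftEmbedding m)) t
      ≤ (∫ t in (0 : ℝ)..1, ekDensity S t) + π / 4 := by
    rw [← integral_mul_pow_div_one_add_pow hm,
      ← intervalIntegral.integral_add ((continuous_ekDensity h0).intervalIntegrable 0 1) hint]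
    exact intervalIntegral.integral_mono_on zero_le_one
      ((continuous_ekDensity h0U).intervalIntegrable 0 1)
      (((continuous_ekDensity h0).intervalIntegrable 0 1).add hint)
      fun t ht => ekDensity_union_map_add_le h0 hd ht.1
  rw [zS_eq_integral_ekDensity, zS_eq_integral_ekDensity]
  calc 1 / π * ∫ t in (0 : ℝ)..1, ekDensity (S ∪ S.map (addLeftEmbedding m)) t
      ≤ 1 / π * ((∫ t in (0 : ℝ)..1, ekDensity S t) + π / 4) := by gcongr
    _ = 1 / π * (∫ t in (0 : ℝ)..1, ekDensity S t) + 1 / 4 := by field_simp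

theorem zS_Icc_union_Icc_le (k n : ℕ) (hkn : 2 * k < n) :
    zS (Icc 0 k ∪ Icc (n - k) n) ≤ zS (Icc 0 k) + 1 / 4 := by
  have hIcc : Icc (n - k) n = (Icc 0 k).map (addLeftEmbedding (n - k)) := by
    rw [map_add_left_Icc, add_zero, Nat.sub_add_cancel (by omega)]
  rw [hIcc]
  refine zS_union_map_add_le (left_mem_Icc.2 k.zero_le) (disjoint_left.2 fun e he he' => ?_)
  rw [← hIcc, mem_Icc] at he'
  rw [mem_Icc] at he
  omega

theorem sum_sq_convolution_le {a b : ℕ → ℝ} (hb : ∀ i, 0 ≤ b i) (N : ℕ) :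
    ∑ n ∈ range N, (∑ i ∈ range (n + 1), b i * a (n - i)) ^ 2
      ≤ (∑ i ∈ range N, b i) ^ 2 * ∑ j ∈ range N, a j ^ 2 := by
  set B := ∑ i ∈ range N, b i
  have hab : ∀ n i, 0 ≤ b i * a (n - i) ^ 2 := fun n i => mul_nonneg (hb i) (sq_nonneg _)
  calc ∑ n ∈ range N, (∑ i ∈ range (n + 1), b i * a (n - i)) ^ 2
      ≤ ∑ n ∈ range N, B * ∑ i ∈ range (n + 1), b i * a (n - i) ^ 2 := by
        refine sum_le_sum fun n hn => ?_
        refine (sum_sq_le_sum_mul_sum_of_sq_le_mul _ (fun i _ => hb i) (fun i _ => hab n i)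
          fun i _ => le_of_eq (by ring)).trans ?_
        gcongr
        · exact sum_nonneg fun i _ => hab n i
        · exact sum_le_sum_of_subset_of_nonneg (range_subset_range.2 (mem_range.1 hn))
            fun i _ _ => hb i
    _ = B * ∑ i ∈ Ico 0 N, ∑ n ∈ Ico i N, b i * a (n - i) ^ 2 := by
        rw [← mul_sum, sum_Ico_Ico_comm]
        simp only [range_eq_Ico]
    _ ≤ B * ∑ i ∈ range N, b i * ∑ j ∈ range N, a j ^ 2 := by
        simp_rw [sum_Ico_eq_sum_range, Nat.add_sub_cancel_left, ← mul_sum, Nat.sub_zero, zero_add]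
        gcongr with i _
        · exact sum_nonneg fun i _ => hb i
        · exact hb i
        · exact Nat.sub_le N i
    _ = B ^ 2 * ∑ j ∈ range N, a j ^ 2 := by rw [← sum_mul, sq, mul_assoc]

section Interval

variable (k : ℕ) {t : ℝ}

theorem hS_Icc_le (ht : 0 ≤ t) :
    hS (Icc 0 k) t ≤ (∑ i ∈ range k, t ^ i) ^ 2 * gS (Icc 0 k) t := by
  have hconv : ∀ n, ∑ i ∈ range (n + 1), t ^ i * t ^ (n - i) = (n + 1 : ℕ) * t ^ n := by
    intro n
    rw [sum_congr rfl fun i hi => by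
        rw [← pow_add, Nat.add_sub_cancel' (Nat.lt_succ_iff.1 (mem_range.1 hi))],
      sum_const, card_range, nsmul_eq_mul]
  have hh : hS (Icc 0 k) t = ∑ n ∈ range k, (∑ i ∈ range (n + 1), t ^ i * t ^ (n - i)) ^ 2 := by
    rw [hS, ← Nat.range_succ_eq_Icc_zero, sum_range_succ']
    simp only [Nat.cast_zero, zero_pow two_ne_zero, zero_mul, add_zero]
    refine sum_congr rfl fun n _ => ?_
    rw [hconv, mul_pow, ← pow_mul]
    congr 2; omega
  have hg : ∑ j ∈ range k, (t ^ j) ^ 2 ≤ gS (Icc 0 k) t := by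
    rw [gS, ← Nat.range_succ_eq_Icc_zero]
    simp_rw [← pow_mul, mul_comm _ 2]
    exact sum_le_sum_of_subset_of_nonneg (range_subset_range.2 k.le_succ)
      fun j _ _ => (even_two_mul j).pow_nonneg t
  rw [hh]
  exact (sum_sq_convolution_le (fun i => pow_nonneg ht i) k).trans (by gcongr)

theorem ekDensity_Icc_le (ht : 0 ≤ t) : ekDensity (Icc 0 k) t ≤ ∑ i ∈ range k, t ^ i := by
  have hg := gS_pos (left_mem_Icc.2 k.zero_le) t
  have hP : 0 ≤ ∑ i ∈ range k, t ^ i := sum_nonneg fun i _ => pow_nonneg ht i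
  rw [ekDensity, div_le_iff₀ hg, Real.sqrt_le_iff]
  refine ⟨by positivity, (ES_le_gS_mul_hS _ t).trans ?_⟩
  nlinarith [hS_Icc_le k ht]

theorem zS_Icc_le : zS (Icc 0 k) ≤ (1 + log k) / π := by
  have hint : ∫ t in (0 : ℝ)..1, ∑ i ∈ range k, t ^ i = harmonic k := by
    rw [intervalIntegral.integral_finsetSum fun i _ => (continuous_pow i).intervalIntegrable 0 1]
    simp [harmonic, integral_pow]
  have hle : ∫ t in (0 : ℝ)..1, ekDensity (Icc 0 k) t ≤ harmonic k := by
    rw [← hint]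
    exact intervalIntegral.integral_mono_on zero_le_one
      ((continuous_ekDensity (left_mem_Icc.2 k.zero_le)).intervalIntegrable 0 1)
      ((continuous_finsetSum _ fun i _ => continuous_pow i).intervalIntegrable 0 1)
      fun t ht => ekDensity_Icc_le k ht.1
  rw [zS_eq_integral_ekDensity, one_div_mul_eq_div]
  gcongr
  exact hle.trans (harmonic_le_one_add_log k)

end Interval

theorem stmt8 :
    (∀ k n : ℕ, 2 * k < n →
      zS (Finset.Icc 0 k ∪ Finset.Icc (n - k) n) ≤ zS (Finset.Icc 0 k) + 1 / 4) ∧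
    (∃ C : ℝ, C > 0 ∧ ∀ k n : ℕ, 2 ≤ k → 2 * k < n →
      zS (Finset.Icc 0 k ∪ Finset.Icc (n - k) n) ≤ C * Real.log k) := by
  refine ⟨zS_Icc_union_Icc_le, 2, two_pos, fun k n hk hkn => ?_⟩
  have hlog : log 2 ≤ log k := log_le_log two_pos (by exact_mod_cast hk)
  have hπ : (1 + log k) / π ≤ (1 + log k) / 3 := by
    gcongr
    exact pi_gt_three.le
  linarith [zS_Icc_union_Icc_le k n hkn, zS_Icc_le k, log_two_gt_d9]
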